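/- If F is a subfield of ℂ and Ψ is a W-graph over F with vertex set X and vertex-labeling x ↦ I_x, then the eigenspace M(Ψ)_{sgn} = {v ∈ M(Ψ) : h v = sgn(h) v for all h ∈ H^F} has F(u)-basis {x ∈ X : I_x = S}; in particular ⟨M(Ψ), sgn⟩ = N_Ψ(S). -/

import Mathlib

open scoped Classical

noncomputable section

/-- The combinatorial data of a `W`-digraph over the index set `B` of the simple reflections:
for each label `i : B`, every vertex `v` lies on exactly one edge with label `i`, joining `v`
to `mate i v ≠ v`; `head i v` records whether `v` is the head (i.e. the edge is directed into
`v`), and `dash i v` whether that edge is dashed (as opposed to solid). -/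
structure WDigraphData (B V : Type*) where
  mate : B → V → V
  head : B → V → Bool
  dash : B → V → Bool
  mate_mate : ∀ i v, mate i (mate i v) = v
  mate_ne : ∀ i v, mate i v ≠ v
  head_mate : ∀ i v, head i (mate i v) = !(head i v)
  dash_mate : ∀ i v, dash i (mate i v) = dash i v

namespace WDigraphData

variable {B V : Type*} (Γ : WDigraphData B V)

/-- `Γ` has a solid edge `a → b` with label `i`. -/
def Solid (i : B) (a b : V) : Prop :=
  Γ.head i a = false ∧ Γ.dash i a = false ∧ Γ.mate i a = b

/-- `Γ` has a dashed edge `a ⇢ b` with label `i`. -/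
def Dashed (i : B) (a b : V) : Prop :=
  Γ.head i a = false ∧ Γ.dash i a = true ∧ Γ.mate i a = b

/-- There is a directed edge (solid or dashed) from `a` to `b` in `Γ`. -/
def DirEdge (a b : V) : Prop :=
  ∃ i, Γ.head i a = false ∧ Γ.mate i a = b

/-- `Γ.In v` is the set of labels of edges of `Γ` directed into `v`. -/
def In (v : V) : Set B := {i | Γ.head i v = true}

/-- `N_Γ(J)`: the number of vertices `v` with `In(v) = J`. -/
def N (J : Set B) : ℕ := Nat.card {v : V // Γ.In v = J}

/-- The underlying undirected graph of `Γ`. -/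
def underlying : SimpleGraph V where
  Adj a b := ∃ i, Γ.mate i a = b
  symm := by
    constructor
    rintro a b ⟨i, rfl⟩
    exact ⟨i, Γ.mate_mate i a⟩
  loopless := by
    constructor
    rintro a ⟨i, h⟩
    exact Γ.mate_ne i a h

/-- `Γ` contains a closed directed path of positive length. -/
def HasDirCycle : Prop :=
  ∃ (n : ℕ) (f : ℕ → V), 0 < n ∧ f n = f 0 ∧ ∀ k < n, Γ.DirEdge (f k) (f (k + 1))

/-- `Γ` is acyclic: it contains no closed directed path of positive length. -/
def Acyclic : Prop := ¬ Γ.HasDirCycle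

/-- The connected component `c` of `Γ` is acyclic: `Γ` has no closed directed path of
positive length lying in `c`. -/
def AcyclicComponent (c : Γ.underlying.ConnectedComponent) : Prop :=
  ¬ ∃ (n : ℕ) (f : ℕ → V), 0 < n ∧ f n = f 0 ∧
      (∀ k < n, Γ.DirEdge (f k) (f (k + 1))) ∧ Γ.underlying.connectedComponentMk (f 0) = c

/-- `Γ_J`: remove from `Γ` all edges whose labels lie outside `J`. -/
def restrict (J : Set B) : WDigraphData J V where
  mate i v := Γ.mate i v
  head i v := Γ.head i v
  dash i v := Γ.dash i v
  mate_mate i v := Γ.mate_mate i v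
  mate_ne i v := Γ.mate_ne i v
  head_mate i v := Γ.head_mate i v
  dash_mate i v := Γ.dash_mate i v

variable (K : Type*) [Field K] (q : K)

/-- The image of a basis vector `v` under the operator `τ_i` giving the action of `T_{s_i}`
on `M(Γ)`: for a solid edge `α → β` with label `i`, `T_{s_i} α = β` and
`T_{s_i} β = q²α + (q²−1)β`; for a dashed edge `α ⇢ β` with label `i`,
`T_{s_i} α = qα + (q+1)β` and `T_{s_i} β = (q²−q)α + (q²−q−1)β`. -/
def tauFun (i : B) (v : V) : V →₀ K :=
  if Γ.head i v then
    if Γ.dash i v then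
      (q ^ 2 - q) • Finsupp.single (Γ.mate i v) 1 + (q ^ 2 - q - 1) • Finsupp.single v 1
    else
      q ^ 2 • Finsupp.single (Γ.mate i v) 1 + (q ^ 2 - 1) • Finsupp.single v 1
  else
    if Γ.dash i v then
      q • Finsupp.single v 1 + (q + 1) • Finsupp.single (Γ.mate i v) 1
    else
      Finsupp.single (Γ.mate i v) 1

/-- The operator `τ_i` on the free module `M(Γ)` with basis the vertices of `Γ`. -/
def tau (i : B) : (V →₀ K) →ₗ[K] (V →₀ K) :=
  Finsupp.lsum K fun v => LinearMap.toSpanSingleton K (V →₀ K) (Γ.tauFun K q i v)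

end WDigraphData

/-- The data of a `W`-graph in the sense of Gyoja: vertex set `X`, vertex labels
`I x ⊆ B`, and edge weights `mu : X × X → F`. -/
structure WGraphData (B X F : Type*) where
  I : X → Set B
  mu : X → X → F

namespace WGraphData

variable {B X F : Type*} (Ψ : WGraphData B X F)
variable (K : Type*) [Field F] [Field K] [Algebra F K] [Fintype X] (q : K)

/-- The image of the basis vector `x` under the operator by which `T_{s_i}` acts on `M(Ψ)`:
`T_{s_i} x = −x` if `i ∈ I x`, and `T_{s_i} x = q²x + q Σ_{y, i ∈ I y} μ(y,x) y` otherwise. -/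
def tauFun (i : B) (x : X) : X →₀ K :=
  if i ∈ Ψ.I x then -Finsupp.single x 1
  else q ^ 2 • Finsupp.single x 1 +
    q • ∑ y : X, if i ∈ Ψ.I y then algebraMap F K (Ψ.mu y x) • Finsupp.single y (1 : K) else 0

/-- The operator by which `T_{s_i}` acts on the free module `M(Ψ)` with basis `X`. -/
def tau (i : B) : (X →₀ K) →ₗ[K] (X →₀ K) :=
  Finsupp.lsum K fun x => LinearMap.toSpanSingleton K (X →₀ K) (Ψ.tauFun K q i x)

/-- `N_Ψ(J)`: the number of vertices `x` with `I x = J`. -/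
def N (J : Set B) : ℕ := Nat.card {x : X // Ψ.I x = J}

end WGraphData

/-- For a module structure on `M` given by an algebra morphism `ρ : H → End M` and a linear
character `lam` of `H`, the eigenspace `M_lam = {v ∈ M | h v = lam(h) v for all h ∈ H}`. -/
def charSpace {K M H : Type*} [Field K] [AddCommGroup M] [Module K M] [Ring H] [Algebra K H]
    (ρ : H →ₐ[K] Module.End K M) (lam : H →ₐ[K] K) : Submodule K M where
  carrier := {v | ∀ h, ρ h v = lam h • v}
  add_mem' := by
    intro a b ha hb h
    rw [map_add, ha h, hb h, ← smul_add]
  zero_mem' := by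
    intro h
    rw [map_zero, smul_zero]
  smul_mem' := by
    intro c a ha h
    rw [map_smul, ha h, smul_comm]

end

/-!
A vector in the sign eigenspace is killed by `T_s + 1` for every simple reflection `s`. If
`s ∉ I_x`, the `x`-coordinate of `T_s v` is `u² v_x` (a vertex `y` with `s ∈ I_y` contributes
only to the `y`-coordinate), so `(u² + 1) v_x = 0` and `v_x = 0`: the eigenspace lies in the
span of the vertices with `I_x = S`. Conversely each such vertex is fixed by every `-T_s`,
hence `T_w` acts on it by `(-1)^ℓ(w)`, by induction on `ℓ(w)` along left descents; since the
`T_w` form a basis of the Hecke algebra, it lies in the sign eigenspace.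
-/

theorem RatFunc.X_sq_ne_neg_one (k : Type*) [Field k] : (RatFunc.X : RatFunc k) ^ 2 ≠ -1 := by
  intro h
  refine Polynomial.X_pow_add_C_ne_zero two_pos (1 : k) (RatFunc.algebraMap_injective k ?_)
  simp [h]

noncomputable def Finsupp.basisSupported {X : Type*} (K : Type*) [Field K] (p : X → Prop) :
    Module.Basis {x // p x} K (Finsupp.supported K K {x | p x}) :=
  Finsupp.basisSingleOne.map (Finsupp.supportedEquivFinsupp _).symm

@[simp]
theorem Finsupp.basisSupported_apply {X : Type*} (K : Type*) [Field K] (p : X → Prop)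
    (x : {x // p x}) : (Finsupp.basisSupported K p x : X →₀ K) = Finsupp.single x.val 1 := by
  simp only [Finsupp.basisSupported, Module.Basis.map_apply, Finsupp.coe_basisSingleOne]
  exact Finsupp.supportedEquivFinsupp_symm_single _ x 1

theorem mem_charSpace_of_basis {K V H ι : Type*} [Field K] [AddCommGroup V] [Module K V] [Ring H]
    [Algebra K H] (ρ : H →ₐ[K] Module.End K V) (lam : H →ₐ[K] K) (b : Module.Basis ι K H)
    {v : V} (hv : ∀ j, ρ (b j) v = lam (b j) • v) : v ∈ charSpace ρ lam := by
  have : (LinearMap.applyₗ v).comp ρ.toLinearMap =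
      (LinearMap.toSpanSingleton K V v).comp lam.toLinearMap :=
    b.ext fun j => by simpa using hv j
  intro h
  simpa using LinearMap.congr_fun this h

section Hecke

variable {B W : Type*} [Group W] {M : CoxeterMatrix B} (cs : CoxeterSystem M W)
  {K H V : Type*} [Field K] [Ring H] [Algebra K H] [AddCommGroup V] [Module K V]
  (T : W → H) (ρ : H →ₐ[K] Module.End K V)

theorem apply_T_eq_neg_one_pow_length (hT1 : T 1 = 1)
    (hTmul : ∀ (i : B) (w : W), cs.length w < cs.length (cs.simple i * w) →
      T (cs.simple i) * T w = T (cs.simple i * w))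
    {v : V} (hv : ∀ i, ρ (T (cs.simple i)) v = -v) (w : W) :
    ρ (T w) v = (-1 : K) ^ cs.length w • v := by
  induction hn : cs.length w generalizing w with
  | zero => simp [cs.length_eq_zero_iff.mp hn, hT1]
  | succ n ih =>
    have hw : w ≠ 1 := by rintro rfl; simp at hn
    obtain ⟨i, hi⟩ := cs.exists_leftDescent_of_ne_one hw
    have hlen : cs.length (cs.simple i * w) = n := by rw [cs.isLeftDescent_iff] at hi; omega
    have hmul := hTmul i (cs.simple i * w) (by rw [cs.simple_mul_simple_cancel_left]; omega)
    rw [cs.simple_mul_simple_cancel_left] at hmul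
    rw [← hmul, map_mul, Module.End.mul_apply, ih _ hlen, map_smul, hv, pow_succ, mul_smul,
      neg_one_smul]

end Hecke

namespace WGraphData

variable {B X F : Type*} (Ψ : WGraphData B X F)
variable {K : Type*} [Field F] [Field K] [Algebra F K] [Fintype X] (q : K)

theorem tau_single (i : B) (x : X) (c : K) :
    Ψ.tau K q i (Finsupp.single x c) = c • Ψ.tauFun K q i x := by
  simp [tau]

theorem tauFun_apply_of_notMem {i : B} {x : X} (hix : i ∉ Ψ.I x) (z : X) :
    Ψ.tauFun K q i z x = q ^ 2 * Finsupp.single z 1 x := by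
  have hne : ∀ y, i ∈ Ψ.I y → y ≠ x := fun y hy hyx => hix (hyx ▸ hy)
  by_cases hiz : i ∈ Ψ.I z
  · simp [tauFun, hiz, hne z hiz]
  · rw [tauFun, if_neg hiz, Finsupp.add_apply, Finsupp.smul_apply, Finsupp.smul_apply,
      Finsupp.finsetSum_apply, Finset.sum_eq_zero fun y _ => ?_, smul_zero, add_zero, smul_eq_mul]
    split_ifs with hy
    · simp [hne y hy]
    · rfl

theorem tau_apply_of_notMem {i : B} {x : X} (hix : i ∉ Ψ.I x) (v : X →₀ K) :
    Ψ.tau K q i v x = q ^ 2 * v x := by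
  suffices Finsupp.lapply x ∘ₗ Ψ.tau K q i = q ^ 2 • Finsupp.lapply x from
    LinearMap.congr_fun this v
  refine Finsupp.lhom_ext fun z c => ?_
  simp only [LinearMap.comp_apply, tau_single, Finsupp.lapply_apply, Finsupp.smul_apply,
    tauFun_apply_of_notMem Ψ q hix, LinearMap.smul_apply, smul_eq_mul, Finsupp.single_apply]
  split_ifs <;> ring

theorem tau_eq_neg_of_mem_supported {i : B} {v : X →₀ K}
    (hv : v ∈ Finsupp.supported K K {x | i ∈ Ψ.I x}) : Ψ.tau K q i v = -v := by
  rw [Finsupp.supported_eq_span_single] at hv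
  refine LinearMap.eqOn_span' (g := -LinearMap.id) ?_ hv
  rintro _ ⟨x, hx, rfl⟩
  simp [tau_single, tauFun, Set.mem_ofPred_eq.mp hx]

theorem charSpace_le_supported {H : Type*} [Ring H] [Algebra K H]
    (ρ : H →ₐ[K] Module.End K (X →₀ K)) (lam : H →ₐ[K] K) (t : B → H)
    (hρ : ∀ i, ρ (t i) = Ψ.tau K q i) (hlam : ∀ i, lam (t i) = -1) (hq : q ^ 2 ≠ -1) :
    charSpace ρ lam ≤ Finsupp.supported K K {x | Ψ.I x = Set.univ} := by
  intro v hv x hx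
  by_contra hxs
  obtain ⟨i, hi⟩ : ∃ i, i ∉ Ψ.I x := by simpa [Set.eq_univ_iff_forall] using hxs
  have h := congr($(hv (t i)) x)
  rw [hρ, hlam, tau_apply_of_notMem Ψ q hi, Finsupp.smul_apply, smul_eq_mul] at h
  exact hq (mul_right_cancel₀ (Finsupp.mem_support_iff.mp hx) (by linear_combination h))

theorem supported_le_charSpace {W : Type*} [Group W] {M : CoxeterMatrix B}
    (cs : CoxeterSystem M W) {H : Type*} [Ring H] [Algebra K H] (T : W → H)
    (bT : Module.Basis W K H) (hbT : ∀ w, bT w = T w) (hT1 : T 1 = 1)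
    (hTmul : ∀ (i : B) (w : W), cs.length w < cs.length (cs.simple i * w) →
      T (cs.simple i) * T w = T (cs.simple i * w))
    (σ : H →ₐ[K] Module.End K (X →₀ K)) (hσ : ∀ i, σ (T (cs.simple i)) = Ψ.tau K q i)
    (sgn : H →ₐ[K] K) (hsgn : ∀ w, sgn (T w) = (-1 : K) ^ cs.length w) :
    Finsupp.supported K K {x | Ψ.I x = Set.univ} ≤ charSpace σ sgn := by
  intro v hv
  have hsimple (i : B) : σ (T (cs.simple i)) v = -v := by
    rw [hσ]
    refine Ψ.tau_eq_neg_of_mem_supported q (Finsupp.supported_mono ?_ hv)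
    intro x hx
    simp [Set.mem_ofPred_eq.mp hx]
  refine mem_charSpace_of_basis σ sgn bT fun w => ?_
  rw [hbT, hsgn, apply_T_eq_neg_one_pow_length cs T σ hT1 hTmul hsimple]

end WGraphData

theorem wgraph_sgn_eigenspace_basis_general
    {B W X : Type*} [Group W] {M : CoxeterMatrix B} (cs : CoxeterSystem M W)
    (F : Subfield ℂ)
    -- `H` is the Hecke algebra of `(W, S)` over `F(u)`, with standard basis `T`
    (H : Type*) [Ring H] [Algebra (RatFunc F) H]
    (T : W → H) (bT : Module.Basis W (RatFunc F) H) (hbT : ∀ w, bT w = T w)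
    (hT1 : T 1 = 1)
    (hTmul : ∀ (i : B) (w : W), cs.length w < cs.length (cs.simple i * w) →
      T (cs.simple i) * T w = T (cs.simple i * w))
    -- `Ψ` is a `W`-graph over `F`, with `H^F`-module `M(Ψ)` given by `σ`
    [Fintype X] (Ψ : WGraphData B X F)
    (σ : H →ₐ[RatFunc F] Module.End (RatFunc F) (X →₀ RatFunc F))
    (hσ : ∀ i : B, σ (T (cs.simple i)) = Ψ.tau (RatFunc F) RatFunc.X i)
    -- `sgn` is the sign character of `H^F`
    (sgn : H →ₐ[RatFunc F] RatFunc F)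
    (hsgn : ∀ w : W, sgn (T w) = (-1 : RatFunc F) ^ cs.length w) :
    (∃ b : Module.Basis {x : X // Ψ.I x = Set.univ} (RatFunc F) (charSpace σ sgn),
        ∀ x : {x : X // Ψ.I x = Set.univ},
          (b x : X →₀ RatFunc F) = Finsupp.single x.val 1) ∧
      Module.finrank (RatFunc F) (charSpace σ sgn) = Ψ.N Set.univ := by
  have hsgn_simple (i : B) : sgn (T (cs.simple i)) = -1 := by
    rw [hsgn, cs.length_simple, pow_one]
  have hchar : charSpace σ sgn = Finsupp.supported _ _ {x | Ψ.I x = Set.univ} :=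
    le_antisymm
      (Ψ.charSpace_le_supported _ σ sgn _ hσ hsgn_simple (RatFunc.X_sq_ne_neg_one F))
      (Ψ.supported_le_charSpace _ cs T bT hbT hT1 hTmul σ hσ sgn hsgn)
  rw [hchar]
  exact ⟨⟨Finsupp.basisSupported _ _, by simp⟩,
    Module.finrank_eq_nat_card_basis (Finsupp.basisSupported _ _)⟩

/-- If `F` is a subfield of `ℂ` and `Ψ` is a `W`-graph over `F`, then the
eigenspace `M(Ψ)_{sgn} = {v ∈ M(Ψ) : h v = sgn(h) v for all h ∈ H^F}` has `F(u)`-basis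
`{x ∈ X : I_x = S}`; in particular `⟨M(Ψ), sgn⟩ = N_Ψ(S)`. -/
theorem wgraph_sgn_eigenspace_basis
    {B W X : Type*} [Group W] {M : CoxeterMatrix B} (cs : CoxeterSystem M W)
    (F : Subfield ℂ)
    -- `H` is the Hecke algebra of `(W, S)` over `F(u)`, with standard basis `T`
    (H : Type*) [Ring H] [Algebra (RatFunc F) H]
    (T : W → H) (bT : Module.Basis W (RatFunc F) H) (hbT : ∀ w, bT w = T w)
    (hT1 : T 1 = 1)
    (hTmul : ∀ (i : B) (w : W), cs.length w < cs.length (cs.simple i * w) →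
      T (cs.simple i) * T w = T (cs.simple i * w))
    (hTsq : ∀ i : B, T (cs.simple i) * T (cs.simple i) =
      (RatFunc.X ^ 2 : RatFunc F) • (1 : H) +
        ((RatFunc.X ^ 2 - 1 : RatFunc F)) • T (cs.simple i))
    -- `Ψ` is a `W`-graph over `F`, with `H^F`-module `M(Ψ)` given by `σ`
    [Fintype X] (Ψ : WGraphData B X F)
    (σ : H →ₐ[RatFunc F] Module.End (RatFunc F) (X →₀ RatFunc F))
    (hσ : ∀ i : B, σ (T (cs.simple i)) = Ψ.tau (RatFunc F) RatFunc.X i)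
    -- `sgn` is the sign character of `H^F`
    (sgn : H →ₐ[RatFunc F] RatFunc F)
    (hsgn : ∀ w : W, sgn (T w) = (-1 : RatFunc F) ^ cs.length w) :
    (∃ b : Module.Basis {x : X // Ψ.I x = Set.univ} (RatFunc F) (charSpace σ sgn),
        ∀ x : {x : X // Ψ.I x = Set.univ},
          (b x : X →₀ RatFunc F) = Finsupp.single x.val 1) ∧
      Module.finrank (RatFunc F) (charSpace σ sgn) = Ψ.N Set.univ :=
  wgraph_sgn_eigenspace_basis_general cs F H T bT hbT hT1 hTmul Ψ σ hσ sgn hsgn
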